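/- For any ξ ∈ F_q((T^{-1})) and any positive integer n, the uniform exponent satisfies ŵ_n(ξ) = ŵ_n(ξ^p), where p is the characteristic. -/

import Mathlib

open Polynomial
open scoped Classical

namespace MahlerKoksmaFq

noncomputable section

variable (Fq : Type) [Field Fq] [Fintype Fq]

/-- `K Fq` models `F_q((T⁻¹))`: Laurent series in the variable `t = T⁻¹`. -/
abbrev K := LaurentSeries Fq

/-- The element `T` (the inverse of the Laurent-series variable `t = T⁻¹`). -/
def Tvar : K Fq := HahnSeries.single (-1 : ℤ) 1

/-- The absolute value `|ξ| = q^{-ν(ξ)}` on `F_q((T⁻¹))`. -/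
def absK (ξ : K Fq) : ℝ :=
  if ξ = 0 then 0 else (Fintype.card Fq : ℝ) ^ (-(HahnSeries.order ξ))

/-- The embedding of `F_q[T]` into `F_q((T⁻¹))`, sending `T` to `Tvar`. -/
def emb : Polynomial Fq →+* K Fq :=
  Polynomial.eval₂RingHom (algebraMap Fq (K Fq)) (Tvar Fq)

/-- Evaluation of `P ∈ F_q[T][X]` at `ξ ∈ F_q((T⁻¹))`. -/
def evalK (P : Polynomial (Polynomial Fq)) (ξ : K Fq) : K Fq :=
  P.eval₂ (emb Fq) ξ

/-- Height of a polynomial over `F_q[T]`: the maximum of the absolute values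
`q^{deg c}` of its coefficients. -/
def HP (P : Polynomial (Polynomial Fq)) : ℝ :=
  (Fintype.card Fq : ℝ) ^ (P.support.sup fun i => (P.coeff i).natDegree)

/-- `ξ` is algebraic (over `F_q[T]`) of degree at most `n`. -/
def IsAlgDegLe (ξ : K Fq) (n : ℕ) : Prop :=
  ∃ P : Polynomial (Polynomial Fq), P ≠ 0 ∧ P.natDegree ≤ n ∧ evalK Fq P ξ = 0

/-- `ξ` is algebraic over `F_q[T]`. -/
def IsAlgK (ξ : K Fq) : Prop :=
  ∃ P : Polynomial (Polynomial Fq), P ≠ 0 ∧ evalK Fq P ξ = 0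

/-- The degree of an algebraic element of `F_q((T⁻¹))`. -/
def degA (α : K Fq) : ℕ :=
  sInf {d | ∃ P : Polynomial (Polynomial Fq), P ≠ 0 ∧ P.natDegree = d ∧ evalK Fq P α = 0}

/-- The height of an algebraic element `α` of `F_q((T⁻¹))`: the least height of a
 nonzero annihilating polynomial of minimal degree (= height of the minimal
 defining polynomial over `F_q[T]`). -/
def HA (α : K Fq) : ℝ :=
  sInf {h | ∃ P : Polynomial (Polynomial Fq),
    P ≠ 0 ∧ P.natDegree = degA Fq α ∧ evalK Fq P α = 0 ∧ h = HP Fq P}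

/-- The defining set for Mahler's exponent `w_n`. -/
def wnSet (ξ : K Fq) (n : ℕ) : Set ℝ :=
  {w | {P : Polynomial (Polynomial Fq) |
      P.natDegree ≤ n ∧ 0 < absK Fq (evalK Fq P ξ) ∧
      absK Fq (evalK Fq P ξ) < HP Fq P ^ (-w)}.Infinite}

/-- Mahler's exponent `w_n(ξ)`. -/
def wn (ξ : K Fq) (n : ℕ) : EReal :=
  sSup ((fun w : ℝ => (w : EReal)) '' wnSet Fq ξ n)

/-- The defining set for `w_n^{sep}` (separable polynomials only). -/
def wnsepSet (ξ : K Fq) (n : ℕ) : Set ℝ :=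
  {w | {P : Polynomial (Polynomial Fq) |
      P.Separable ∧ P.natDegree ≤ n ∧ 0 < absK Fq (evalK Fq P ξ) ∧
      absK Fq (evalK Fq P ξ) < HP Fq P ^ (-w)}.Infinite}

/-- The exponent `w_n^{sep}(ξ)`. -/
def wnsep (ξ : K Fq) (n : ℕ) : EReal :=
  sSup ((fun w : ℝ => (w : EReal)) '' wnsepSet Fq ξ n)

/-- The defining set for Koksma's exponent `w_n^*` (approximation by algebraic
elements lying in `F_q((T⁻¹))`). -/
def wnstarSet (ξ : K Fq) (n : ℕ) : Set ℝ :=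
  {w | {α : K Fq | IsAlgK Fq α ∧ degA Fq α ≤ n ∧ 0 < absK Fq (ξ - α) ∧
      absK Fq (ξ - α) < HA Fq α ^ (-w - 1)}.Infinite}

/-- Koksma's exponent `w_n^*(ξ)`. -/
def wnstar (ξ : K Fq) (n : ℕ) : EReal :=
  sSup ((fun w : ℝ => (w : EReal)) '' wnstarSet Fq ξ n)

/-- The defining set for the uniform exponent `ŵ_n`. -/
def hwnSet (ξ : K Fq) (n : ℕ) : Set ℝ :=
  {w | ∃ H0 : ℝ, ∀ H : ℝ, H0 < H → ∃ P : Polynomial (Polynomial Fq),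
      P.natDegree ≤ n ∧ HP Fq P ≤ H ∧ 0 < absK Fq (evalK Fq P ξ) ∧
      absK Fq (evalK Fq P ξ) < H ^ (-w)}

/-- The uniform exponent `ŵ_n(ξ)`. -/
def hwn (ξ : K Fq) (n : ℕ) : EReal :=
  sSup ((fun w : ℝ => (w : EReal)) '' hwnSet Fq ξ n)

/-- The defining set for the uniform exponent `ŵ_n^{sep}` (separable polynomials only). -/
def hwnsepSet (ξ : K Fq) (n : ℕ) : Set ℝ :=
  {w | ∃ H0 : ℝ, ∀ H : ℝ, H0 < H → ∃ P : Polynomial (Polynomial Fq),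
      P.Separable ∧ P.natDegree ≤ n ∧ HP Fq P ≤ H ∧ 0 < absK Fq (evalK Fq P ξ) ∧
      absK Fq (evalK Fq P ξ) < H ^ (-w)}

/-- The uniform exponent `ŵ_n^{sep}(ξ)`. -/
def hwnsep (ξ : K Fq) (n : ℕ) : EReal :=
  sSup ((fun w : ℝ => (w : EReal)) '' hwnsepSet Fq ξ n)

/-- The fractional part of a Laurent series in `T⁻¹`: the part with only
 negative powers of `T` (positive powers of the series variable `t = T⁻¹`). -/
def fracPart (η : K Fq) : K Fq :=
  { coeff := fun m => if 0 < m then η.coeff m else 0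
    isPWO_support' := η.isPWO_support'.mono (fun m hm => by
      by_cases h : 0 < m
      · simpa [Function.mem_support, h] using hm
      · simp [Function.mem_support, h] at hm) }

/-- The fractional-part norm `‖η‖ = |η - [η]|`. -/
def fracNorm (η : K Fq) : ℝ := absK Fq (fracPart Fq η)

/-- `max{‖R(T)ξ‖, …, ‖R(T)ξⁿ‖}`. -/
def maxFrac (ξ : K Fq) (n : ℕ) (R : Polynomial Fq) : ℝ :=
  sSup ((fun i => fracNorm Fq (emb Fq R * ξ ^ i)) '' Set.Icc 1 n)

/-- The defining set for the exponent of simultaneous approximation `λ_n`. -/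
def lamSet (ξ : K Fq) (n : ℕ) : Set ℝ :=
  {l | {R : Polynomial Fq | 0 < maxFrac Fq ξ n R ∧
      maxFrac Fq ξ n R < (Fintype.card Fq : ℝ) ^ (-(l * R.natDegree))}.Infinite}

/-- The exponent of simultaneous approximation `λ_n(ξ)`. -/
def lam (ξ : K Fq) (n : ℕ) : EReal :=
  sSup ((fun w : ℝ => (w : EReal)) '' lamSet Fq ξ n)

/-- The defining set for the uniform exponent `λ̂_n`. -/
def hlamSet (ξ : K Fq) (n : ℕ) : Set ℝ :=
  {l | ∃ d0 : ℕ, ∀ d : ℕ, d0 < d → ∃ R : Polynomial Fq, R.natDegree ≤ d ∧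
      0 < maxFrac Fq ξ n R ∧
      maxFrac Fq ξ n R < (Fintype.card Fq : ℝ) ^ (-(l * d))}

/-- The uniform exponent `λ̂_n(ξ)`. -/
def hlam (ξ : K Fq) (n : ℕ) : EReal :=
  sSup ((fun w : ℝ => (w : EReal)) '' hlamSet Fq ξ n)

/-- An algebraic closure of `F_q((T⁻¹))`; its algebraic elements are exactly the
algebraic elements of the completion `C_∞`. -/
abbrev Kbar := AlgebraicClosure (K Fq)

/-- The embedding of `F_q[T]` into the algebraic closure. -/
def embbar : Polynomial Fq →+* Kbar Fq :=
  (algebraMap (K Fq) (Kbar Fq)).comp (emb Fq)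

/-- Evaluation of `P ∈ F_q[T][X]` at a point of the algebraic closure. -/
def evalKbar (P : Polynomial (Polynomial Fq)) (x : Kbar Fq) : Kbar Fq :=
  P.eval₂ (embbar Fq) x

/-- The unique extension of the absolute value of `F_q((T⁻¹))` to its algebraic
closure: `|x| = |N(x)|^{1/d} = |a_0|^{1/d}` where `a_0` is the constant term and
`d` the degree of the minimal polynomial of `x` over `F_q((T⁻¹))`. -/
def absC (x : Kbar Fq) : ℝ :=
  absK Fq ((minpoly (K Fq) x).coeff 0) ^ ((1 : ℝ) / (minpoly (K Fq) x).natDegree)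

/-- `x ∈ C_∞` is algebraic over `F_q[T]`. -/
def IsAlgKbar (x : Kbar Fq) : Prop :=
  ∃ P : Polynomial (Polynomial Fq), P ≠ 0 ∧ evalKbar Fq P x = 0

/-- Degree over `F_q[T]` of an algebraic element of `C_∞`. -/
def degAbar (x : Kbar Fq) : ℕ :=
  sInf {d | ∃ P : Polynomial (Polynomial Fq), P ≠ 0 ∧ P.natDegree = d ∧ evalKbar Fq P x = 0}

/-- Height of an algebraic element of `C_∞`. -/
def HAbar (x : Kbar Fq) : ℝ :=
  sInf {h | ∃ P : Polynomial (Polynomial Fq),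
    P ≠ 0 ∧ P.natDegree = degAbar Fq x ∧ evalKbar Fq P x = 0 ∧ h = HP Fq P}

/-- The defining set for the exponent `w_n^@` (approximation by algebraic
elements of `C_∞`). -/
def wnAtSet (ξ : K Fq) (n : ℕ) : Set ℝ :=
  {w | {α : Kbar Fq | IsAlgKbar Fq α ∧ degAbar Fq α ≤ n ∧
      0 < absC Fq (algebraMap (K Fq) (Kbar Fq) ξ - α) ∧
      absC Fq (algebraMap (K Fq) (Kbar Fq) ξ - α) < HAbar Fq α ^ (-w - 1)}.Infinite}

/-- The exponent `w_n^@(ξ)`. -/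
def wnAt (ξ : K Fq) (n : ℕ) : EReal :=
  sSup ((fun w : ℝ => (w : EReal)) '' wnAtSet Fq ξ n)

/-- The defining set for the uniform exponent `ŵ_n^@`. -/
def hwnAtSet (ξ : K Fq) (n : ℕ) : Set ℝ :=
  {w | ∃ H0 : ℝ, ∀ H : ℝ, H0 < H → ∃ α : Kbar Fq, IsAlgKbar Fq α ∧ degAbar Fq α ≤ n ∧
      HAbar Fq α ≤ H ∧ 0 < absC Fq (algebraMap (K Fq) (Kbar Fq) ξ - α) ∧
      absC Fq (algebraMap (K Fq) (Kbar Fq) ξ - α) < (HAbar Fq α)⁻¹ * H ^ (-w)}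

/-- The uniform exponent `ŵ_n^@(ξ)`. -/
def hwnAt (ξ : K Fq) (n : ℕ) : EReal :=
  sSup ((fun w : ℝ => (w : EReal)) '' hwnAtSet Fq ξ n)

/-- `w(ξ) = limsup_n w_n(ξ)/n`. -/
def wlim (ξ : K Fq) : EReal :=
  Filter.atTop.limsup fun n : ℕ => wn Fq ξ n * (((n : ℝ)⁻¹ : ℝ) : EReal)

/-- `w^*(ξ) = limsup_n w_n^*(ξ)/n`. -/
def wlimstar (ξ : K Fq) : EReal :=
  Filter.atTop.limsup fun n : ℕ => wnstar Fq ξ n * (((n : ℝ)⁻¹ : ℝ) : EReal)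

/-- Height of a polynomial over `C_∞`: maximum of the absolute values of its
coefficients. -/
def HC (P : Polynomial (Kbar Fq)) : ℝ :=
  sSup ((fun i => absC Fq (P.coeff i)) '' Set.Iic P.natDegree)

end
end MahlerKoksmaFq

/-!
Raising the coefficients of `P ∈ F_q[T][X]` to the `p`-th power gives a polynomial of height
`H(P)ᵖ` whose value at `ξᵖ` is `P(ξ)ᵖ`. Conversely, writing every coefficient of `Q` as
`∑_{r<p} Tʳ cᵣᵖ` (possible since `F_q` is perfect) gives `Q(ξᵖ) = ∑_{r<p} Tʳ Rᵣ(ξ)ᵖ` with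
`H(Rᵣ)ᵖ ≤ H(Q)`, and by the ultrametric inequality `|Rᵣ(ξ)|ᵖ ≤ |Q(ξᵖ)|` for some `r` with
`Rᵣ(ξ) ≠ 0`. So good approximations of `ξ` at height `H` and of `ξᵖ` at height `Hᵖ` correspond,
with the same exponent.
-/
namespace Polynomial

theorem eval₂_map_frobenius_pow {R A : Type*} [CommSemiring R] [CommSemiring A] (p : ℕ)
    [ExpChar R p] [ExpChar A p] (φ : R →+* A) (P : R[X]) (x : A) :
    (P.map (frobenius R p)).eval₂ φ (x ^ p) = P.eval₂ φ x ^ p := by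
  have hφ : φ.comp (frobenius R p) = (frobenius A p).comp φ := by
    ext c
    simp [frobenius_def]
  rw [eval₂_map, hφ]
  exact (hom_eval₂ P φ (frobenius A p) x).symm

section PthRootComponent

variable {F : Type*} [CommSemiring F] (p : ℕ) [Fact p.Prime] [CharP F p] [PerfectRing F p]

noncomputable def pthRootComponent (f : F[X]) (r : ℕ) : F[X] :=
  ∑ j ∈ Finset.range (f.natDegree + 1),
    monomial j ((frobeniusEquiv F p).symm (f.coeff (j * p + r)))

theorem coeff_pthRootComponent (f : F[X]) (r j : ℕ) :
    (pthRootComponent p f r).coeff j = (frobeniusEquiv F p).symm (f.coeff (j * p + r)) := by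
  simp only [pthRootComponent, finsetSum_coeff, coeff_monomial, Finset.sum_ite_eq',
    Finset.mem_range, ite_eq_left_iff, not_lt]
  intro hj
  have : f.natDegree < j * p + r := by
    have := (Fact.out : p.Prime).one_le
    nlinarith
  rw [coeff_eq_zero_of_natDegree_lt this, map_zero]

@[simp]
theorem pthRootComponent_zero (r : ℕ) : pthRootComponent p (0 : F[X]) r = 0 := by
  simp [pthRootComponent]

theorem natDegree_pthRootComponent_le (f : F[X]) (r : ℕ) :
    (pthRootComponent p f r).natDegree ≤ f.natDegree / p := by
  rw [natDegree_le_iff_coeff_eq_zero]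
  intro j hj
  have : f.natDegree < j * p + r := by
    have := (Nat.div_lt_iff_lt_mul (Fact.out : p.Prime).pos).mp hj
    omega
  rw [coeff_pthRootComponent, coeff_eq_zero_of_natDegree_lt this, map_zero]

theorem coeff_pthRootComponent_pow (f : F[X]) (r k : ℕ) :
    (pthRootComponent p f r ^ p).coeff k = if p ∣ k then f.coeff (k + r) else 0 := by
  rw [← map_frobenius_expand, coeff_map, coeff_expand (Fact.out : p.Prime).pos]
  split_ifs with hk
  · rw [coeff_pthRootComponent, Nat.div_mul_cancel hk, frobenius_apply_frobeniusEquiv_symm]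
  · exact map_zero _

theorem sum_X_pow_mul_pthRootComponent_pow (f : F[X]) :
    ∑ r ∈ Finset.range p, X ^ r * pthRootComponent p f r ^ p = f := by
  ext m
  simp only [finsetSum_coeff, coeff_X_pow_mul', coeff_pthRootComponent_pow]
  rw [Finset.sum_eq_single (m % p)]
  · rw [if_pos (Nat.mod_le m p), if_pos (Nat.dvd_sub_mod m), Nat.sub_add_cancel (Nat.mod_le m p)]
  · intro r hr hne
    split_ifs with hrm hdvd
    · have : m ≡ r [MOD p] := ((Nat.modEq_iff_dvd' hrm).2 hdvd).symm
      exact absurd (Nat.mod_eq_of_modEq this (Finset.mem_range.1 hr)).symm hne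
    all_goals rfl
  · exact fun h => absurd (Finset.mem_range.2 (Nat.mod_lt m (Fact.out : p.Prime).pos)) h

noncomputable def pthRootComponentCoeffwise (Q : F[X][X]) (r : ℕ) : F[X][X] :=
  ∑ i ∈ Finset.range (Q.natDegree + 1), monomial i (pthRootComponent p (Q.coeff i) r)

theorem coeff_pthRootComponentCoeffwise (Q : F[X][X]) (r i : ℕ) :
    (pthRootComponentCoeffwise p Q r).coeff i = pthRootComponent p (Q.coeff i) r := by
  simp only [pthRootComponentCoeffwise, finsetSum_coeff, coeff_monomial, Finset.sum_ite_eq',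
    Finset.mem_range, ite_eq_left_iff, not_lt]
  intro hi
  rw [coeff_eq_zero_of_natDegree_lt (by omega), pthRootComponent_zero]

theorem natDegree_pthRootComponentCoeffwise_le (Q : F[X][X]) (r : ℕ) :
    (pthRootComponentCoeffwise p Q r).natDegree ≤ Q.natDegree := by
  rw [natDegree_le_iff_coeff_eq_zero]
  intro i hi
  rw [coeff_pthRootComponentCoeffwise, coeff_eq_zero_of_natDegree_lt hi, pthRootComponent_zero]

theorem sum_C_X_pow_mul_map_frobenius_pthRootComponentCoeffwise (Q : F[X][X]) :
    ∑ r ∈ Finset.range p,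
      C (X ^ r) * (pthRootComponentCoeffwise p Q r).map (frobenius F[X] p) = Q := by
  ext1 i
  simp only [finsetSum_coeff, coeff_C_mul, coeff_map, coeff_pthRootComponentCoeffwise,
    frobenius_def]
  exact sum_X_pow_mul_pthRootComponent_pow p (Q.coeff i)

theorem eval₂_pow_eq_sum_pthRootComponentCoeffwise {A : Type*} [CommSemiring A] [CharP A p]
    (φ : F[X] →+* A) (Q : F[X][X]) (x : A) :
    Q.eval₂ φ (x ^ p) =
      ∑ r ∈ Finset.range p, φ X ^ r * (pthRootComponentCoeffwise p Q r).eval₂ φ x ^ p := by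
  conv_lhs => rw [← sum_C_X_pow_mul_map_frobenius_pthRootComponentCoeffwise p Q]
  simp only [eval₂_finsetSum, eval₂_mul, eval₂_map_frobenius_pow, map_pow, eval₂_pow, eval₂_C]

end PthRootComponent

end Polynomial

namespace HahnSeries

instance {Γ R : Type*} [AddCommMonoid Γ] [PartialOrder Γ] [IsOrderedCancelAddMonoid Γ]
    [Semiring R] (p : ℕ) [CharP R p] : CharP R⟦Γ⟧ p :=
  charP_of_injective_ringHom C_injective p

theorem order_sum_le_of_orderTop_lt {Γ R ι : Type*} [Zero Γ] [LinearOrder Γ] [AddCommMonoid R]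
    {s : Finset ι} {f : ι → R⟦Γ⟧} {j : ι} (hj : j ∈ s) (hfj : f j ≠ 0)
    (hlt : ∀ i ∈ s, i ≠ j → (f j).orderTop < (f i).orderTop) :
    (∑ i ∈ s, f i).order ≤ (f j).order := by
  apply order_le_of_coeff_ne_zero
  rw [coeff_sum, Finset.sum_eq_single_of_mem j hj]
  · exact coeff_order_eq_zero.not.2 hfj
  · intro i hi hij
    apply coeff_eq_zero_of_lt_orderTop
    rw [order_eq_orderTop_of_ne_zero hfj]
    exact hlt i hi hij

end HahnSeries

namespace MahlerKoksmaFq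

open Filter

section

variable {Fq : Type} [Field Fq]

theorem Tvar_ne_zero : Tvar Fq ≠ 0 := HahnSeries.single_ne_zero one_ne_zero

theorem emb_X : emb Fq X = Tvar Fq := eval₂_X _ _

theorem order_Tvar_pow_mul_pow {y : K Fq} (hy : y ≠ 0) (r p : ℕ) :
    (Tvar Fq ^ r * y ^ p).order = p * y.order - r := by
  rw [HahnSeries.order_mul (pow_ne_zero _ Tvar_ne_zero) (pow_ne_zero _ hy),
    HahnSeries.order_pow, HahnSeries.order_pow, Tvar, HahnSeries.order_single one_ne_zero,
    nsmul_eq_mul, nsmul_eq_mul]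
  ring

theorem eq_of_order_Tvar_pow_mul_pow_eq {p i j : ℕ} (hi : i < p) (hj : j < p) {y z : K Fq}
    (hy : y ≠ 0) (hz : z ≠ 0) (h : (Tvar Fq ^ i * y ^ p).order = (Tvar Fq ^ j * z ^ p).order) :
    i = j := by
  rw [order_Tvar_pow_mul_pow hy, order_Tvar_pow_mul_pow hz] at h
  have hdvd : (p : ℤ) ∣ (i : ℤ) - j := ⟨y.order - z.order, by linarith⟩
  have := Int.eq_zero_of_abs_lt_dvd hdvd (by rw [abs_lt]; omega)
  omega

theorem evalK_map_frobenius (p : ℕ) [Fact p.Prime] [CharP Fq p] (P : Fq[X][X]) (ξ : K Fq) :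
    evalK Fq (P.map (frobenius Fq[X] p)) (ξ ^ p) = evalK Fq P ξ ^ p :=
  eval₂_map_frobenius_pow p (emb Fq) P ξ

variable [Fintype Fq]

theorem one_le_card_real : (1 : ℝ) ≤ Fintype.card Fq := Nat.one_le_cast.2 Fintype.card_pos

@[simp]
theorem absK_zero : absK Fq 0 = 0 := by simp [absK]

@[simp]
theorem absK_one : absK Fq 1 = 1 := by simp [absK]

theorem absK_of_ne_zero {x : K Fq} (hx : x ≠ 0) :
    absK Fq x = (Fintype.card Fq : ℝ) ^ (-x.order) :=
  if_neg hx

theorem absK_pos {x : K Fq} (hx : x ≠ 0) : 0 < absK Fq x := by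
  rw [absK_of_ne_zero hx]
  positivity

theorem absK_nonneg (x : K Fq) : 0 ≤ absK Fq x := by
  rcases eq_or_ne x 0 with rfl | hx
  · simp
  · exact (absK_pos hx).le

theorem ne_zero_of_absK_pos {x : K Fq} (h : 0 < absK Fq x) : x ≠ 0 := by
  rintro rfl
  simp at h

theorem absK_mul (x y : K Fq) : absK Fq (x * y) = absK Fq x * absK Fq y := by
  rcases eq_or_ne x 0 with rfl | hx
  · simp
  rcases eq_or_ne y 0 with rfl | hy
  · simp
  rw [absK_of_ne_zero (mul_ne_zero hx hy), absK_of_ne_zero hx, absK_of_ne_zero hy,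
    HahnSeries.order_mul hx hy, neg_add, zpow_add₀ (by positivity)]

theorem absK_pow (x : K Fq) (n : ℕ) : absK Fq (x ^ n) = absK Fq x ^ n := by
  induction n with
  | zero => simp
  | succ n ih => rw [pow_succ, absK_mul, ih, pow_succ]

theorem absK_Tvar : absK Fq (Tvar Fq) = Fintype.card Fq := by
  rw [absK_of_ne_zero Tvar_ne_zero, Tvar, HahnSeries.order_single one_ne_zero, neg_neg,
    zpow_one]

theorem absK_le_absK_of_order_le {x y : K Fq} (hx : x ≠ 0) (hy : y ≠ 0)
    (h : y.order ≤ x.order) : absK Fq x ≤ absK Fq y := by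
  rw [absK_of_ne_zero hx, absK_of_ne_zero hy]
  exact zpow_le_zpow_right₀ one_le_card_real (neg_le_neg h)

/-- The terms `Tʳ yᵣᵖ` with `r < p` have pairwise distinct orders modulo `p`, so the one of
least order is not cancelled in the sum. -/
theorem exists_absK_pow_le_absK_sum (p : ℕ) (y : ℕ → K Fq)
    (hs : ∑ r ∈ Finset.range p, Tvar Fq ^ r * y r ^ p ≠ 0) :
    ∃ r, y r ≠ 0 ∧ absK Fq (y r) ^ p ≤ absK Fq (∑ r ∈ Finset.range p, Tvar Fq ^ r * y r ^ p) := by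
  have hp : p ≠ 0 := by
    rintro rfl
    simp at hs
  set f : ℕ → K Fq := fun r => Tvar Fq ^ r * y r ^ p with hf
  obtain ⟨j, hj, hmin⟩ := (Finset.range p).exists_min_image (fun r => (f r).orderTop)
    (Finset.nonempty_of_sum_ne_zero hs)
  have hfj : f j ≠ 0 := by
    intro h0
    refine hs (Finset.sum_eq_zero fun i hi => ?_)
    have := hmin i hi
    rwa [h0, HahnSeries.orderTop_zero, top_le_iff, HahnSeries.orderTop_eq_top] at this
  have hyj : y j ≠ 0 := by
    rintro h0
    simp [hf, h0, hp] at hfj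
  have hlt : ∀ i ∈ Finset.range p, i ≠ j → (f j).orderTop < (f i).orderTop := by
    intro i hi hij
    refine (hmin i hi).lt_of_ne fun heq => hij ?_
    have hfi : f i ≠ 0 := by
      rintro h0
      rw [h0, HahnSeries.orderTop_zero, HahnSeries.orderTop_eq_top] at heq
      exact hfj heq
    have hyi : y i ≠ 0 := by
      rintro h0
      simp [hf, h0, hp] at hfi
    rw [← HahnSeries.order_eq_orderTop_of_ne_zero hfj,
      ← HahnSeries.order_eq_orderTop_of_ne_zero hfi, WithTop.coe_inj] at heq
    exact eq_of_order_Tvar_pow_mul_pow_eq (Finset.mem_range.1 hi) (Finset.mem_range.1 hj)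
      hyi hyj heq.symm
  refine ⟨j, hyj, ?_⟩
  calc absK Fq (y j) ^ p ≤ absK Fq (Tvar Fq) ^ j * absK Fq (y j) ^ p :=
        le_mul_of_one_le_left (pow_nonneg (absK_nonneg _) p)
          (one_le_pow₀ (by rw [absK_Tvar]; exact one_le_card_real))
    _ = absK Fq (f j) := by rw [hf, absK_mul, absK_pow, absK_pow]
    _ ≤ absK Fq (∑ r ∈ Finset.range p, f r) :=
        absK_le_absK_of_order_le hfj hs (HahnSeries.order_sum_le_of_orderTop_lt hj hfj hlt)

theorem HP_nonneg (P : Fq[X][X]) : 0 ≤ HP Fq P := by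
  unfold HP
  positivity

def IsApprox (ξ : K Fq) (n : ℕ) (w H : ℝ) (P : Fq[X][X]) : Prop :=
  P.natDegree ≤ n ∧ HP Fq P ≤ H ∧ 0 < absK Fq (evalK Fq P ξ) ∧ absK Fq (evalK Fq P ξ) < H ^ (-w)

theorem mem_hwnSet_iff {ξ : K Fq} {n : ℕ} {w : ℝ} :
    w ∈ hwnSet Fq ξ n ↔ ∀ᶠ H in atTop, ∃ P, IsApprox ξ n w H P := by
  rw [atTop_basis_Ioi.eventually_iff]
  simp [hwnSet, IsApprox]

section Frobenius

variable {p : ℕ} [Fact p.Prime] [CharP Fq p]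

theorem evalK_pow_eq_sum (Q : Fq[X][X]) (ξ : K Fq) :
    evalK Fq Q (ξ ^ p) = ∑ r ∈ Finset.range p,
      Tvar Fq ^ r * evalK Fq (pthRootComponentCoeffwise p Q r) ξ ^ p := by
  rw [evalK, eval₂_pow_eq_sum_pthRootComponentCoeffwise, emb_X]
  rfl

theorem HP_map_frobenius_le (P : Fq[X][X]) :
    HP Fq (P.map (frobenius Fq[X] p)) ≤ HP Fq P ^ p := by
  rw [HP, HP, ← pow_mul]
  refine pow_le_pow_right₀ one_le_card_real (Finset.sup_le fun i hi => ?_)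
  have hPi : P.coeff i ≠ 0 := by
    rintro h0
    simp [h0] at hi
  rw [coeff_map, frobenius_def, natDegree_pow, mul_comm]
  exact Nat.mul_le_mul_right p
    (Finset.le_sup (f := fun i => (P.coeff i).natDegree) (mem_support_iff.2 hPi))

theorem HP_pthRootComponentCoeffwise_pow_le (Q : Fq[X][X]) (r : ℕ) :
    HP Fq (pthRootComponentCoeffwise p Q r) ^ p ≤ HP Fq Q := by
  rw [HP, HP, ← pow_mul]
  refine pow_le_pow_right₀ one_le_card_real ?_
  set D := Q.support.sup fun i => (Q.coeff i).natDegree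
  refine le_trans (Nat.mul_le_mul_right p (Finset.sup_le fun i _ => ?_)) (Nat.div_mul_le_self D p)
  rw [coeff_pthRootComponentCoeffwise]
  refine (natDegree_pthRootComponent_le p _ r).trans (Nat.div_le_div_right ?_)
  by_cases hQi : Q.coeff i = 0
  · simp [hQi]
  · exact Finset.le_sup (f := fun i => (Q.coeff i).natDegree) (mem_support_iff.2 hQi)

theorem IsApprox.map_frobenius {ξ : K Fq} {n : ℕ} {w H : ℝ} {P : Fq[X][X]}
    (h : IsApprox ξ n w H P) (hH : 0 ≤ H) :
    IsApprox (ξ ^ p) n w (H ^ p) (P.map (frobenius Fq[X] p)) := by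
  obtain ⟨hdeg, hHP, hpos, hlt⟩ := h
  refine ⟨natDegree_map_le.trans hdeg,
    (HP_map_frobenius_le P).trans (pow_le_pow_left₀ (HP_nonneg P) hHP p), ?_, ?_⟩
  · rw [evalK_map_frobenius, absK_pow]
    exact pow_pos hpos p
  · rw [evalK_map_frobenius, absK_pow, ← Real.rpow_pow_comm hH]
    exact pow_lt_pow_left₀ hlt (absK_nonneg _) (Fact.out : p.Prime).ne_zero

theorem exists_isApprox_of_isApprox_pow {ξ : K Fq} {n : ℕ} {w H : ℝ} {Q : Fq[X][X]}
    (h : IsApprox (ξ ^ p) n w (H ^ p) Q) (hH : 0 ≤ H) : ∃ R, IsApprox ξ n w H R := by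
  obtain ⟨hdeg, hHQ, hpos, hlt⟩ := h
  have hp : p ≠ 0 := (Fact.out : p.Prime).ne_zero
  rw [evalK_pow_eq_sum] at hpos hlt
  obtain ⟨r, hr, hle⟩ := exists_absK_pow_le_absK_sum p _ (ne_zero_of_absK_pos hpos)
  refine ⟨pthRootComponentCoeffwise p Q r,
    (natDegree_pthRootComponentCoeffwise_le p Q r).trans hdeg,
    (pow_le_pow_iff_left₀ (HP_nonneg _) hH hp).1
      ((HP_pthRootComponentCoeffwise_pow_le Q r).trans hHQ),
    absK_pos hr, ?_⟩
  rw [← Real.rpow_pow_comm hH] at hlt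
  exact (pow_lt_pow_iff_left₀ (absK_nonneg _) (Real.rpow_nonneg hH _) hp).1 (hle.trans_lt hlt)

theorem exists_isApprox_iff_pow {ξ : K Fq} {n : ℕ} {w H : ℝ} (hH : 0 ≤ H) :
    (∃ P, IsApprox ξ n w H P) ↔ ∃ Q, IsApprox (ξ ^ p) n w (H ^ p) Q :=
  ⟨fun ⟨_, hP⟩ => ⟨_, hP.map_frobenius hH⟩,
    fun ⟨_, hQ⟩ => exists_isApprox_of_isApprox_pow hQ hH⟩

end Frobenius

end

theorem hwn_frobenius_general (p : ℕ) [Fact p.Prime] (Fq : Type) [Field Fq] [Fintype Fq] [CharP Fq p]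
    (ξ : K Fq) (n : ℕ) :
    hwn Fq ξ n = hwn Fq (ξ ^ p) n := by
  have hp : p ≠ 0 := (Fact.out : p.Prime).ne_zero
  suffices hwnSet Fq ξ n = hwnSet Fq (ξ ^ p) n by rw [hwn, hwn, this]
  ext w
  simp only [mem_hwnSet_iff]
  constructor
  · intro h
    filter_upwards [(tendsto_rpow_atTop (by positivity : (0 : ℝ) < (p : ℝ)⁻¹)).eventually h,
      eventually_ge_atTop 0] with H hH hH0
    rwa [exists_isApprox_iff_pow (Real.rpow_nonneg hH0 _),
      Real.rpow_inv_natCast_pow hH0 hp] at hH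
  · intro h
    filter_upwards [(tendsto_pow_atTop hp).eventually h, eventually_ge_atTop 0] with H hH hH0
    exact (exists_isApprox_iff_pow hH0).2 hH

/-- `ŵ_n(ξ) = ŵ_n(ξ^p)`. -/
theorem hwn_frobenius (p : ℕ) [Fact p.Prime] (Fq : Type) [Field Fq] [Fintype Fq] [CharP Fq p]
    (ξ : K Fq) (n : ℕ) (hn : 1 ≤ n) :
    hwn Fq ξ n = hwn Fq (ξ ^ p) n :=
  hwn_frobenius_general p Fq ξ n

end MahlerKoksmaFq
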